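/- arXiv:2403.13686 — 6 statements merged into one kernel-verified Lean document; each statement's English description precedes it below -/
import Mathlib

section
/- Let S ⊂ ℝ² be a finite generic point set and k ≥ 0 odd. Then the minimum size of a fine covering of S by (+k)-paths is at most M_+(S) + k, where M_+(S) is the maximum length of a (+k)-path subset of S. -/
def Generic (S : Finset (ℝ × ℝ)) : Prop :=
  ∀ p ∈ S, ∀ q ∈ S, p ≠ q → p.1 ≠ q.1 ∧ p.2 ≠ q.2

def IncChain (P : Finset (ℝ × ℝ)) : Prop :=
  ∀ p ∈ P, ∀ q ∈ P, p ≠ q → (p.1 < q.1 ∧ p.2 < q.2) ∨ (q.1 < p.1 ∧ q.2 < p.2)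

def DecChain (P : Finset (ℝ × ℝ)) : Prop :=
  ∀ p ∈ P, ∀ q ∈ P, p ≠ q → (p.1 < q.1 ∧ q.2 < p.2) ∨ (q.1 < p.1 ∧ p.2 < q.2)

/-- Sections of a signed k-modal path: x-consecutive, with the even-indexed
sections increasing iff up = true, and alternating monotonicities. -/
def SignedSections (k : ℕ) (up : Bool) (F : Fin (k + 1) → Finset (ℝ × ℝ)) : Prop :=
  (∀ i j : Fin (k + 1), i < j → ∀ p ∈ F i, ∀ q ∈ F j, p.1 < q.1) ∧
  (∀ j : Fin (k + 1), if decide ((j : ℕ) % 2 = 0) = up then IncChain (F j) else DecChain (F j))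

/-- P is a (+k)-path (up = true) or a (−k)-path (up = false). -/
def IsSignedModalPath (k : ℕ) (up : Bool) (P : Finset (ℝ × ℝ)) : Prop :=
  ∃ F : Fin (k + 1) → Finset (ℝ × ℝ),
    (∀ p ∈ P, ∃ i, p ∈ F i) ∧ (∀ i, F i ⊆ P) ∧ SignedSections k up F

def IsModalPath (k : ℕ) (P : Finset (ℝ × ℝ)) : Prop :=
  ∃ up : Bool, IsSignedModalPath k up P

/-- A fine covering of S by signed k-modal paths (given with their sections):
for each section index i, the i-th sections partition S. -/
def IsFineCovering (k : ℕ) (up : Bool) (S : Finset (ℝ × ℝ)) {m : ℕ}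
    (C : Fin m → Fin (k + 1) → Finset (ℝ × ℝ)) : Prop :=
  (∀ a, SignedSections k up (C a)) ∧ (∀ a i, C a i ⊆ S) ∧
  (∀ i : Fin (k + 1), ∀ p ∈ S, ∃! a, p ∈ C a i)



section Dilworth
variable {α : Type*} [DecidableEq α] (r : α → α → Prop)

def FChain (C : Finset α) : Prop := ∀ a ∈ C, ∀ b ∈ C, a ≠ b → r a b ∨ r b a

def FAntichain (A : Finset α) : Prop := ∀ a ∈ A, ∀ b ∈ A, a ≠ b → ¬ r a b ∧ ¬ r b a

variable {r}

lemma exists_max_elt (htr : Transitive r) (hirr : Irreflexive r) :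
    ∀ (Q : Finset α), Q.Nonempty → ∃ t ∈ Q, ∀ s ∈ Q, ¬ r t s := by
  classical
  intro Q
  induction Q using Finset.induction with
  | empty => exact fun h => absurd h (by simp)
  | @insert a Q ha ih =>
    intro _
    rcases Q.eq_empty_or_nonempty with h | h
    · subst h
      exact ⟨a, by simp, by simpa using hirr a⟩
    · obtain ⟨t, htQ, htmax⟩ := ih h
      by_cases hta : r t a
      · refine ⟨a, Finset.mem_insert_self _ _, ?_⟩
        intro s hs hras
        rcases Finset.mem_insert.mp hs with rfl | hs
        · exact hirr _ hras
        · exact htmax s hs (htr hta hras)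
      · refine ⟨t, Finset.mem_insert_of_mem htQ, ?_⟩
        intro s hs hrts
        rcases Finset.mem_insert.mp hs with rfl | hs
        · exact hta hrts
        · exact htmax s hs hrts

lemma glue_chain (Q K : Finset α) (hKQ : K ⊆ Q) (hK : FChain r K) {m : ℕ}
    (f : Fin m → Finset α) (hch : ∀ a, FChain r (f a)) (hsub : ∀ a, f a ⊆ Q \ K)
    (hex : ∀ x ∈ Q \ K, ∃! a, x ∈ f a) :
    ∃ F : Fin (m + 1) → Finset α, (∀ a, FChain r (F a)) ∧ (∀ a, F a ⊆ Q) ∧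
      ∀ x ∈ Q, ∃! a, x ∈ F a := by
  classical
  refine ⟨fun a => if h : (a : ℕ) < m then f ⟨a, h⟩ else K, ?_, ?_, ?_⟩
  · intro a
    by_cases h : (a : ℕ) < m <;> simp [h, hch, hK]
  · intro a
    by_cases h : (a : ℕ) < m
    · simpa [h] using (hsub ⟨a, h⟩).trans (Finset.sdiff_subset)
    · simpa [h] using hKQ
  · intro x hx
    by_cases hxK : x ∈ K
    · refine ⟨⟨m, Nat.lt_succ_self m⟩, by simp [hxK], ?_⟩
      intro b hb
      by_cases hbm : (b : ℕ) < m
      · simp only [hbm, dif_pos] at hb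
        exact absurd ((hsub _ hb)) (by simp [hxK])
      · refine Fin.ext ?_
        simp only [Fin.val_mk]
        omega
    · obtain ⟨a, hax, hau⟩ := hex x (Finset.mem_sdiff.mpr ⟨hx, hxK⟩)
      refine ⟨⟨(a : ℕ), a.isLt.trans (Nat.lt_succ_self m)⟩, ?_, ?_⟩
      · simp only [Fin.val_mk, dif_pos a.isLt]
        exact hax
      · intro b hb
        by_cases hbm : (b : ℕ) < m
        · simp only [hbm, dif_pos] at hb
          have h2 := congrArg Fin.val (hau _ hb)
          exact Fin.ext (by simpa using h2)
        · simp only [hbm, dif_neg] at hb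
          exact absurd hb hxK

theorem galvin (htr : Transitive r) (hirr : Irreflexive r) :
    ∀ (n : ℕ) (Q : Finset α), Q.card ≤ n → ∀ (w : ℕ),
      (∀ A ⊆ Q, FAntichain r A → A.card ≤ w) →
      ∃ m ≤ w, ∃ f : Fin m → Finset α, (∀ a, FChain r (f a)) ∧ (∀ a, f a ⊆ Q) ∧
        ∀ x ∈ Q, ∃! a, x ∈ f a := by
  classical
  intro n
  induction n with
  | zero =>
    intro Q hQ w _
    have hQe : Q = ∅ := Finset.card_eq_zero.mp (Nat.le_zero.mp hQ)
    subst hQe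
    exact ⟨0, Nat.zero_le w, Fin.elim0, fun a => a.elim0, fun a => a.elim0, by simp⟩
  | succ n IH =>
    intro Q hQcard w hw
    rcases Q.eq_empty_or_nonempty with rfl | hQne
    · exact ⟨0, Nat.zero_le w, Fin.elim0, fun a => a.elim0, fun a => a.elim0, by simp⟩
    obtain ⟨m0, hm0Q, hm0max⟩ := exists_max_elt htr hirr Q hQne
    have hw1 : 1 ≤ w := by
      have h1 := hw {m0} (by simpa using hm0Q) ?_
      · simpa using h1
      · intro a ha b hb hab
        simp only [Finset.mem_singleton] at ha hb
        exact absurd (ha.trans hb.symm) hab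
    have hm0singQ : {m0} ⊆ Q := by simpa using hm0Q
    have hP'card : (Q \ {m0}).card ≤ n := by
      have h2 : (Q \ {m0}).card < Q.card := by
        refine Finset.card_lt_card ?_
        refine ⟨Finset.sdiff_subset, fun hsub => ?_⟩
        have := hsub hm0Q
        simp at this
      omega
    have hP'Q : Q \ {m0} ⊆ Q := Finset.sdiff_subset
    by_cases hc : ∀ A ⊆ Q \ {m0}, FAntichain r A → A.card ≤ w - 1
    · obtain ⟨m', hm'w, f', hch', hsub', hex'⟩ := IH (Q \ {m0}) hP'card (w - 1) hc
      have hsing : FChain r {m0} := by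
        intro a ha b hb hab
        simp only [Finset.mem_singleton] at ha hb
        exact absurd (ha.trans hb.symm) hab
      obtain ⟨F, h1, h2, h3⟩ := glue_chain Q {m0} hm0singQ hsing f' hch' hsub' hex'
      exact ⟨m' + 1, by omega, F, h1, h2, h3⟩
    · push_neg at hc
      obtain ⟨A, hAP', hAanti, hAcard⟩ := hc
      have hAw : A.card = w := le_antisymm (hw A (hAP'.trans hP'Q) hAanti) (by omega)
      obtain ⟨m', hm'w, f', hch', hsub', hex'⟩ := IH (Q \ {m0}) hP'card w
        (fun B hB hanti => hw B (hB.trans hP'Q) hanti)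
      -- fiber counting machinery
      have hfiber : ∀ B ⊆ Q \ {m0}, FAntichain r B → B.Nonempty →
          ∃ g : α → Fin m', (∀ x ∈ B, x ∈ f' (g x)) ∧
            B.card = ∑ a ∈ Finset.univ, (B.filter (fun x => g x = a)).card ∧
            ∀ a, (B.filter (fun x => g x = a)).card ≤ 1 := by
        intro B hBP' hBanti hBne
        obtain ⟨x0, hx0⟩ := hBne
        obtain ⟨a0, -, -⟩ := hex' x0 (hBP' hx0)
        refine ⟨fun x => if hx : x ∈ Q \ {m0} then (hex' x hx).choose else a0, ?_, ?_, ?_⟩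
        · intro x hx
          simp only [hBP' hx, dif_pos]
          exact (hex' x (hBP' hx)).choose_spec.1
        · exact Finset.card_eq_sum_card_fiberwise (fun x _ => Finset.mem_univ _)
        · intro a
          refine Finset.card_le_one.mpr ?_
          intro x hx y hy
          simp only [Finset.mem_filter] at hx hy
          have hxf : x ∈ f' a := by
            have := (hex' x (hBP' hx.1)).choose_spec.1
            simp only [hBP' hx.1, dif_pos] at hx
            rwa [hx.2] at this
          have hyf : y ∈ f' a := by
            have := (hex' y (hBP' hy.1)).choose_spec.1
            simp only [hBP' hy.1, dif_pos] at hy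
            rwa [hy.2] at this
          by_contra hxy
          rcases hch' a x hxf y hyf hxy with h | h
          · exact (hBanti x hx.1 y hy.1 hxy).1 h
          · exact (hBanti x hx.1 y hy.1 hxy).2 h
      have hAne : A.Nonempty := Finset.card_pos.mp (by omega)
      have hm'ge : w ≤ m' := by
        obtain ⟨g, -, hsum, hone⟩ := hfiber A hAP' hAanti hAne
        calc w = A.card := hAw.symm
        _ = _ := hsum
        _ ≤ ∑ _a ∈ (Finset.univ : Finset (Fin m')), 1 := Finset.sum_le_sum (fun a _ => hone a)
        _ = m' := by simp
      have hmeets : ∀ B ⊆ Q \ {m0}, FAntichain r B → B.card = w →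
          ∀ a₀ : Fin m', ∃ y ∈ B, y ∈ f' a₀ := by
        intro B hBP' hBanti hBw a₀
        by_contra hno
        push_neg at hno
        have hBne : B.Nonempty := Finset.card_pos.mp (by omega)
        obtain ⟨g, hg, hsum, hone⟩ := hfiber B hBP' hBanti hBne
        have hempty : (B.filter (fun x => g x = a₀)).card = 0 := by
          refine Finset.card_eq_zero.mpr (Finset.filter_eq_empty_iff.mpr ?_)
          intro x hx hgx
          exact hno x hx (hgx ▸ hg x hx)
        have hsum2 : ∑ a ∈ Finset.univ, (B.filter (fun x => g x = a)).card
            = ∑ a ∈ Finset.univ.erase a₀, (B.filter (fun x => g x = a)).card := by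
          rw [← Finset.add_sum_erase _ _ (Finset.mem_univ a₀), hempty, zero_add]
        have hle : ∑ a ∈ Finset.univ.erase a₀, (B.filter (fun x => g x = a)).card
            ≤ ∑ _a ∈ Finset.univ.erase a₀, 1 :=
          Finset.sum_le_sum (fun a _ => hone a)
        have hcard : (Finset.univ.erase a₀).card = m' - 1 := by
          rw [Finset.card_erase_of_mem (Finset.mem_univ _)]
          simp
        have : B.card ≤ m' - 1 := by
          rw [hsum, hsum2]
          calc _ ≤ _ := hle
          _ = (Finset.univ.erase a₀).card := by simp
          _ = m' - 1 := hcard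
        omega
      -- T i and maximal elements
      set T : Fin m' → Finset α := fun i => (f' i).filter
        (fun c => ∃ B, B ⊆ Q \ {m0} ∧ FAntichain r B ∧ B.card = w ∧ c ∈ B) with hT
      have hTne : ∀ i, (T i).Nonempty := by
        intro i
        obtain ⟨y, hyA, hyf⟩ := hmeets A hAP' hAanti hAw i
        exact ⟨y, Finset.mem_filter.mpr ⟨hyf, A, hAP', hAanti, hAw, hyA⟩⟩
      have hTmax : ∀ i, ∃ t ∈ T i, ∀ s ∈ T i, ¬ r t s :=
        fun i => exists_max_elt htr hirr (T i) (hTne i)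
      choose aa haaT haamax using hTmax
      have haaf : ∀ i, aa i ∈ f' i := fun i => (Finset.mem_filter.mp (haaT i)).1
      have haaP' : ∀ i, aa i ∈ Q \ {m0} := fun i => hsub' i (haaf i)
      have haainj : ∀ i j, aa i = aa j → i = j := by
        intro i j hij
        obtain ⟨c, hc, hu⟩ := hex' (aa i) (haaP' i)
        have h1 := hu i (haaf i)
        have h2 := hu j (by rw [hij]; exact haaf j)
        rw [h1, h2]
      have hAstar : ∀ i j, i ≠ j → ¬ r (aa i) (aa j) := by
        intro i j hij hr
        obtain ⟨Bj, hBjP', hBjanti, hBjw, hajBj⟩ := (Finset.mem_filter.mp (haaT j)).2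
        obtain ⟨y, hyBj, hyf⟩ := hmeets Bj hBjP' hBjanti hBjw i
        have hyT : y ∈ T i := Finset.mem_filter.mpr ⟨hyf, Bj, hBjP', hBjanti, hBjw, hyBj⟩
        rcases eq_or_ne y (aa i) with rfl | hne
        · have hyne : aa i ≠ aa j := fun h => hij (haainj i j h)
          exact (hBjanti _ hyBj (aa j) hajBj hyne).1 hr
        · rcases hch' i y hyf (aa i) (haaf i) hne with hy1 | hy2
          · have h3 := htr hy1 hr
            have hyne : y ≠ aa j := by
              rintro rfl
              exact hirr _ h3
            exact (hBjanti y hyBj (aa j) hajBj hyne).1 h3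
          · exact haamax i y hyT hy2
      -- some aa i is below m0
      have hex_i : ∃ i, r (aa i) m0 := by
        by_contra hno
        push_neg at hno
        have hanti : FAntichain r (insert m0 (Finset.univ.image aa)) := by
          intro u hu v hv huv
          rcases Finset.mem_insert.mp hu with rfl | hu'
          · rcases Finset.mem_insert.mp hv with rfl | hv'
            · exact absurd rfl huv
            · obtain ⟨j, -, rfl⟩ := Finset.mem_image.mp hv'
              exact ⟨hm0max _ (hP'Q (haaP' j)), hno j⟩
          · obtain ⟨i, -, rfl⟩ := Finset.mem_image.mp hu'
            rcases Finset.mem_insert.mp hv with rfl | hv'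
            · exact ⟨hno i, hm0max _ (hP'Q (haaP' i))⟩
            · obtain ⟨j, -, rfl⟩ := Finset.mem_image.mp hv'
              have hij : i ≠ j := fun h => huv (h ▸ rfl)
              exact ⟨hAstar i j hij, hAstar j i (Ne.symm hij)⟩
        have hsubQ : insert m0 (Finset.univ.image aa) ⊆ Q := by
          intro x hx
          rcases Finset.mem_insert.mp hx with rfl | hx'
          · exact hm0Q
          · obtain ⟨i, -, rfl⟩ := Finset.mem_image.mp hx'
            exact hP'Q (haaP' i)
        have hcard : (insert m0 (Finset.univ.image aa)).card = m' + 1 := by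
          rw [Finset.card_insert_of_notMem, Finset.card_image_of_injective _
            (fun i j => haainj i j)]
          · simp
          · intro hmem
            obtain ⟨i, -, heq⟩ := Finset.mem_image.mp hmem
            have := haaP' i
            rw [heq] at this
            simp at this
        have := hw _ hsubQ hanti
        omega
      obtain ⟨i0, hi0⟩ := hex_i
      -- the chain K
      set K : Finset α := insert m0 ((f' i0).filter (fun c => r c (aa i0) ∨ c = aa i0)) with hK
      have hfiltP' : (f' i0).filter (fun c => r c (aa i0) ∨ c = aa i0) ⊆ Q \ {m0} :=
        (Finset.filter_subset _ _).trans (hsub' i0)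
      have hKQ : K ⊆ Q := by
        intro x hx
        rcases Finset.mem_insert.mp hx with rfl | hx'
        · exact hm0Q
        · exact hP'Q (hfiltP' hx')
      have hm0K : m0 ∈ K := Finset.mem_insert_self _ _
      have hrm0 : ∀ c ∈ (f' i0).filter (fun c => r c (aa i0) ∨ c = aa i0), r c m0 := by
        intro c hc
        rcases (Finset.mem_filter.mp hc).2 with h | h
        · exact htr h hi0
        · exact h ▸ hi0
      have hKchain : FChain r K := by
        intro u hu v hv huv
        rcases Finset.mem_insert.mp hu with rfl | hu'
        · rcases Finset.mem_insert.mp hv with rfl | hv'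
          · exact absurd rfl huv
          · exact Or.inr (hrm0 v hv')
        · rcases Finset.mem_insert.mp hv with rfl | hv'
          · exact Or.inl (hrm0 u hu')
          · exact hch' i0 u (Finset.mem_filter.mp hu').1 v (Finset.mem_filter.mp hv').1 huv
      have hQ''card : (Q \ K).card ≤ n := by
        have hsub2 : Q \ K ⊆ Q \ {m0} := by
          refine Finset.sdiff_subset_sdiff (le_refl _) ?_
          intro x hx
          simp only [Finset.mem_singleton] at hx
          exact hx ▸ hm0K
        exact (Finset.card_le_card hsub2).trans hP'card
      have hQ''bound : ∀ B ⊆ Q \ K, FAntichain r B → B.card ≤ w - 1 := by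
        intro B hB hBanti
        by_contra hcon
        push_neg at hcon
        have hBP' : B ⊆ Q \ {m0} := by
          intro x hx
          have h2 := hB hx
          rw [Finset.mem_sdiff] at h2 ⊢
          exact ⟨h2.1, fun hm => h2.2 (by simp only [Finset.mem_singleton] at hm; exact hm ▸ hm0K)⟩
        have hBw : B.card = w := le_antisymm (hw B (hBP'.trans hP'Q) hBanti) (by omega)
        obtain ⟨y, hyB, hyf⟩ := hmeets B hBP' hBanti hBw i0
        have hyT : y ∈ T i0 := Finset.mem_filter.mpr ⟨hyf, B, hBP', hBanti, hBw, hyB⟩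
        have hynotK : y ∉ K := (Finset.mem_sdiff.mp (hB hyB)).2
        have hy1 : ¬(r y (aa i0) ∨ y = aa i0) := fun h =>
          hynotK (Finset.mem_insert_of_mem (Finset.mem_filter.mpr ⟨hyf, h⟩))
        have hyne : y ≠ aa i0 := fun h => hy1 (Or.inr h)
        rcases hch' i0 y hyf (aa i0) (haaf i0) hyne with h | h
        · exact hy1 (Or.inl h)
        · exact haamax i0 y hyT h
      obtain ⟨m'', hm''w, f'', hch'', hsub'', hex''⟩ := IH (Q \ K) hQ''card (w - 1) hQ''bound
      obtain ⟨F, h1, h2, h3⟩ := glue_chain Q K hKQ hKchain f'' hch'' hsub'' hex''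
      exact ⟨m'' + 1, by omega, F, h1, h2, h3⟩

end Dilworth

def rel (t s : (ℝ × ℝ) × ℕ) : Prop :=
  t.1.1 < s.1.1 ∧ (t.2 < s.2 ∨ (t.2 = s.2 ∧
    (if t.2 % 2 = 0 then t.1.2 < s.1.2 else s.1.2 < t.1.2)))

lemma rel_trans : Transitive rel := by
  rintro t s u ⟨hx1, h1⟩ ⟨hx2, h2⟩
  refine ⟨hx1.trans hx2, ?_⟩
  rcases h1 with h1 | ⟨he1, hy1⟩
  · rcases h2 with h2 | ⟨he2, hy2⟩
    · exact Or.inl (h1.trans h2)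
    · exact Or.inl (he2 ▸ h1)
  · rcases h2 with h2 | ⟨he2, hy2⟩
    · exact Or.inl (he1 ▸ h2)
    · refine Or.inr ⟨he1.trans he2, ?_⟩
      by_cases hp : t.2 % 2 = 0
      · rw [if_pos hp] at hy1 ⊢
        rw [if_pos (by rw [← he1]; exact hp)] at hy2
        exact hy1.trans hy2
      · rw [if_neg hp] at hy1 ⊢
        rw [if_neg (by rw [← he1]; exact hp)] at hy2
        exact hy2.trans hy1

lemma rel_irrefl : Irreflexive rel := fun t h => lt_irrefl _ h.1

lemma anti_bound (k : ℕ) (hk : Odd k) (S : Finset (ℝ × ℝ)) (hS : Generic S) (M : ℕ)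
    (hM : ∀ P ⊆ S, IsSignedModalPath k true P → P.card ≤ M)
    (A : Finset ((ℝ × ℝ) × ℕ)) (hA : A ⊆ S ×ˢ Finset.range (k + 1))
    (hanti : FAntichain rel A) : A.card ≤ M + k := by
  classical
  set D := A.image Prod.fst with hD
  have hDS : D ⊆ S := by
    intro p hp
    obtain ⟨t, ht, rfl⟩ := Finset.mem_image.mp hp
    exact (Finset.mem_product.mp (hA ht)).1
  set idx : (ℝ × ℝ) → Finset ℕ := fun p => (A.filter (fun t => t.1 = p)).image Prod.snd with hidx
  have hidxne : ∀ p ∈ D, (idx p).Nonempty := by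
    intro p hp
    obtain ⟨t, ht, rfl⟩ := Finset.mem_image.mp hp
    exact ⟨t.2, Finset.mem_image.mpr ⟨t, Finset.mem_filter.mpr ⟨ht, rfl⟩, rfl⟩⟩
  set ι : (ℝ × ℝ) → ℕ := fun p => if h : (idx p).Nonempty then (idx p).min' h else 0 with hι
  set μ : (ℝ × ℝ) → ℕ := fun p => if h : (idx p).Nonempty then (idx p).max' h else 0 with hμ
  have hmemA : ∀ p, ∀ l ∈ idx p, (p, l) ∈ A := by
    intro p l hl
    obtain ⟨t, ht, rfl⟩ := Finset.mem_image.mp hl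
    have h2 := Finset.mem_filter.mp ht
    have h3 : t = (p, t.2) := Prod.ext h2.2 rfl
    rw [← h3]
    exact h2.1
  have hιmem : ∀ p ∈ D, ι p ∈ idx p := by
    intro p hp
    simp only [hι, dif_pos (hidxne p hp)]
    exact Finset.min'_mem _ _
  have hμmem : ∀ p ∈ D, μ p ∈ idx p := by
    intro p hp
    simp only [hμ, dif_pos (hidxne p hp)]
    exact Finset.max'_mem _ _
  have hιle : ∀ p ∈ D, ∀ l ∈ idx p, ι p ≤ l ∧ l ≤ μ p := by
    intro p hp l hl
    simp only [hι, hμ, dif_pos (hidxne p hp)]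
    exact ⟨Finset.min'_le _ _ hl, Finset.le_max' _ _ hl⟩
  have hμk : ∀ p ∈ D, μ p ≤ k := by
    intro p hp
    have h1 := hmemA p (μ p) (hμmem p hp)
    have h2 := (Finset.mem_product.mp (hA h1)).2
    simpa [Nat.lt_succ_iff] using Finset.mem_range.mp h2
  have hιμ : ∀ p ∈ D, ι p ≤ μ p := fun p hp => (hιle p hp _ (hιmem p hp)).2
  have hxlt : ∀ p ∈ D, ∀ q ∈ D, p ≠ q → ∀ i ∈ idx p, ∀ j ∈ idx q, i < j → q.1 < p.1 := by
    intro p hp q hq hpq i hi j hj hij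
    have hne : ((p, i) : (ℝ × ℝ) × ℕ) ≠ (q, j) := fun h => hpq (congrArg Prod.fst h)
    have h1 := (hanti (p, i) (hmemA p i hi) (q, j) (hmemA q j hj) hne).1
    have hx : ¬ p.1 < q.1 := fun hlt => h1 ⟨hlt, Or.inl hij⟩
    have hne2 := (hS p (hDS hp) q (hDS hq) hpq).1
    rcases lt_or_gt_of_ne hne2 with h | h
    · exact absurd h hx
    · exact h
  have hdisj : ∀ p ∈ D, ∀ q ∈ D, p ≠ q →
      Disjoint (Finset.Ioc (ι p) (μ p)) (Finset.Ioc (ι q) (μ q)) := by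
    intro p hp q hq hpq
    rw [Finset.disjoint_left]
    intro l hl1 hl2
    rw [Finset.mem_Ioc] at hl1 hl2
    have h1 : ι p < μ q := lt_of_lt_of_le hl1.1 hl2.2
    have h2 : ι q < μ p := lt_of_lt_of_le hl2.1 hl1.2
    have h3 := hxlt p hp q hq hpq (ι p) (hιmem p hp) (μ q) (hμmem q hq) h1
    have h4 := hxlt q hq p hp (Ne.symm hpq) (ι q) (hιmem q hq) (μ p) (hμmem p hp) h2
    linarith
  have hιk : ∀ p ∈ D, ι p ≤ k := fun p hp => le_trans (hιμ p hp) (hμk p hp)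
  -- D is a (+k)-path
  have hpath : IsSignedModalPath k true D := by
    refine ⟨fun t => D.filter (fun p => ι p = k - (t : ℕ)), ?_,
      fun t => Finset.filter_subset _ _, ?_, ?_⟩
    · intro p hp
      refine ⟨⟨k - ι p, by omega⟩, Finset.mem_filter.mpr ⟨hp, ?_⟩⟩
      have := hιk p hp
      simp only []
      omega
    · intro i j hij p hpf q hqf
      rw [Finset.mem_filter] at hpf hqf
      have hij' : (i : ℕ) < (j : ℕ) := hij
      have hlt : ι q < ι p := by
        have hi := i.isLt
        have hj := j.isLt
        omega
      have hpq : q ≠ p := by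
        intro h
        rw [h] at hqf
        omega
      exact hxlt q hqf.1 p hpf.1 hpq (ι q) (hιmem q hqf.1) (ι p) (hιmem p hpf.1) hlt
    · intro j
      have hkodd : k % 2 = 1 := Nat.odd_iff.mp hk
      have hjk : (j : ℕ) < k + 1 := j.isLt
      by_cases hj : (j : ℕ) % 2 = 0
      · rw [if_pos (by simp [hj])]
        intro p hpf q hqf hpq
        rw [Finset.mem_filter] at hpf hqf
        have hip : ι p = k - (j : ℕ) := hpf.2
        have hiq : ι q = k - (j : ℕ) := hqf.2
        have hiodd : ¬ (k - (j : ℕ)) % 2 = 0 := by omega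
        have hne : ((p, ι p) : (ℝ × ℝ) × ℕ) ≠ (q, ι q) := fun h => hpq (congrArg Prod.fst h)
        have h1 := hanti (p, ι p) (hmemA p _ (hιmem p hpf.1)) (q, ι q) (hmemA q _ (hιmem q hqf.1)) hne
        have hxy := hS p (hDS hpf.1) q (hDS hqf.1) hpq
        rcases lt_or_gt_of_ne hxy.1 with hx | hx
        · left
          refine ⟨hx, ?_⟩
          have h2 : ¬ q.2 < p.2 := by
            intro hy
            exact h1.1 ⟨hx, Or.inr ⟨hip.trans hiq.symm, by rw [hip, if_neg hiodd]; exact hy⟩⟩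
          rcases lt_or_gt_of_ne hxy.2 with h | h
          · exact h
          · exact absurd h h2
        · right
          refine ⟨hx, ?_⟩
          have h2 : ¬ p.2 < q.2 := by
            intro hy
            exact h1.2 ⟨hx, Or.inr ⟨hiq.trans hip.symm, by simp only [hiq]; simp [hiodd]; exact hy⟩⟩
          rcases lt_or_gt_of_ne hxy.2 with h | h
          · exact absurd h h2
          · exact h
      · rw [if_neg (by simp [hj])]
        intro p hpf q hqf hpq
        rw [Finset.mem_filter] at hpf hqf
        have hip : ι p = k - (j : ℕ) := hpf.2
        have hiq : ι q = k - (j : ℕ) := hqf.2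
        have hieven : (k - (j : ℕ)) % 2 = 0 := by omega
        have hne : ((p, ι p) : (ℝ × ℝ) × ℕ) ≠ (q, ι q) := fun h => hpq (congrArg Prod.fst h)
        have h1 := hanti (p, ι p) (hmemA p _ (hιmem p hpf.1)) (q, ι q) (hmemA q _ (hιmem q hqf.1)) hne
        have hxy := hS p (hDS hpf.1) q (hDS hqf.1) hpq
        rcases lt_or_gt_of_ne hxy.1 with hx | hx
        · left
          refine ⟨hx, ?_⟩
          have h2 : ¬ p.2 < q.2 := by
            intro hy
            exact h1.1 ⟨hx, Or.inr ⟨hip.trans hiq.symm, by rw [hip, if_pos hieven]; exact hy⟩⟩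
          rcases lt_or_gt_of_ne hxy.2 with h | h
          · exact absurd h h2
          · exact h
        · right
          refine ⟨hx, ?_⟩
          have h2 : ¬ q.2 < p.2 := by
            intro hy
            exact h1.2 ⟨hx, Or.inr ⟨hiq.trans hip.symm, by simp only [hiq]; simp [hieven]; exact hy⟩⟩
          rcases lt_or_gt_of_ne hxy.2 with h | h
          · exact h
          · exact absurd h h2
  have hDM : D.card ≤ M := hM D hDS hpath
  have h1 : A.card = ∑ p ∈ D, (A.filter (fun t => t.1 = p)).card :=
    Finset.card_eq_sum_card_image Prod.fst A
  have h2 : ∀ p ∈ D, (A.filter (fun t => t.1 = p)).card = (idx p).card := by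
    intro p hp
    rw [hidx]
    rw [eq_comm]
    apply Finset.card_image_of_injOn
    intro t ht u hu htu
    rw [Finset.mem_coe, Finset.mem_filter] at ht hu
    exact Prod.ext (ht.2.trans hu.2.symm) htu
  have h3 : ∀ p ∈ D, (idx p).card ≤ (μ p - ι p) + 1 := by
    intro p hp
    have hsub : idx p ⊆ insert (ι p) (Finset.Ioc (ι p) (μ p)) := by
      intro l hl
      rcases eq_or_ne l (ι p) with rfl | hne
      · exact Finset.mem_insert_self _ _
      · refine Finset.mem_insert_of_mem (Finset.mem_Ioc.mpr ⟨?_, (hιle p hp l hl).2⟩)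
        exact lt_of_le_of_ne (hιle p hp l hl).1 (Ne.symm hne)
    calc (idx p).card ≤ _ := Finset.card_le_card hsub
    _ ≤ (Finset.Ioc (ι p) (μ p)).card + 1 := Finset.card_insert_le _ _
    _ = (μ p - ι p) + 1 := by rw [Nat.card_Ioc]
  have h4 : ∑ p ∈ D, (μ p - ι p) ≤ k := by
    have hbu : ∑ p ∈ D, (Finset.Ioc (ι p) (μ p)).card
        = (D.biUnion (fun p => Finset.Ioc (ι p) (μ p))).card :=
      (Finset.card_biUnion (fun p hp q hq hpq => hdisj p hp q hq hpq)).symm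
    have hsub : D.biUnion (fun p => Finset.Ioc (ι p) (μ p)) ⊆ Finset.Icc 1 k := by
      intro l hl
      obtain ⟨p, hp, hl⟩ := Finset.mem_biUnion.mp hl
      rw [Finset.mem_Ioc] at hl
      rw [Finset.mem_Icc]
      exact ⟨by omega, le_trans hl.2 (hμk p hp)⟩
    calc ∑ p ∈ D, (μ p - ι p) = ∑ p ∈ D, (Finset.Ioc (ι p) (μ p)).card :=
        Finset.sum_congr rfl (fun p _ => (Nat.card_Ioc _ _).symm)
    _ = _ := hbu
    _ ≤ (Finset.Icc 1 k).card := Finset.card_le_card hsub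
    _ = k := by rw [Nat.card_Icc]; omega
  calc A.card = ∑ p ∈ D, (A.filter (fun t => t.1 = p)).card := h1
  _ = ∑ p ∈ D, (idx p).card := Finset.sum_congr rfl h2
  _ ≤ ∑ p ∈ D, ((μ p - ι p) + 1) := Finset.sum_le_sum h3
  _ = (∑ p ∈ D, (μ p - ι p)) + D.card := by rw [Finset.sum_add_distrib]; simp
  _ ≤ k + M := add_le_add h4 hDM
  _ = M + k := by omega

theorem stmt8 (k : ℕ) (hk : Odd k) (S : Finset (ℝ × ℝ)) (hS : Generic S) (M : ℕ)
    (hM : ∀ P ⊆ S, IsSignedModalPath k true P → P.card ≤ M) :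
    ∃ m : ℕ, m ≤ M + k ∧
      ∃ C : Fin m → Fin (k + 1) → Finset (ℝ × ℝ), IsFineCovering k true S C := by
  classical
  obtain ⟨m, hmw, f, hch, hsubQ, hex⟩ := galvin rel_trans rel_irrefl
    (S ×ˢ Finset.range (k + 1)).card (S ×ˢ Finset.range (k + 1)) le_rfl (M + k)
    (fun A hA hanti => anti_bound k hk S hS M hM A hA hanti)
  have hmem : ∀ (a : Fin m) (i : Fin (k + 1)) (p : ℝ × ℝ),
      p ∈ ((f a).filter (fun t => t.2 = (i : ℕ))).image Prod.fst ↔ (p, (i : ℕ)) ∈ f a := by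
    intro a i p
    constructor
    · intro hp
      obtain ⟨t, ht, rfl⟩ := Finset.mem_image.mp hp
      have h2 := Finset.mem_filter.mp ht
      have h3 : t = (t.1, (i : ℕ)) := Prod.ext rfl h2.2
      rw [← h3]
      exact h2.1
    · intro hp
      exact Finset.mem_image.mpr ⟨(p, (i : ℕ)), Finset.mem_filter.mpr ⟨hp, rfl⟩, rfl⟩
  refine ⟨m, hmw, fun a i => ((f a).filter (fun t => t.2 = (i : ℕ))).image Prod.fst, ?_, ?_, ?_⟩
  · -- SignedSections
    intro a
    constructor
    · intro i j hij p hp q hq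
      rw [hmem] at hp hq
      have hijn : (i : ℕ) < (j : ℕ) := hij
      have hne : ((p, (i : ℕ)) : (ℝ × ℝ) × ℕ) ≠ (q, (j : ℕ)) := by
        intro h
        have h2 := congrArg Prod.snd h
        simp only at h2
        omega
      rcases hch a _ hp _ hq hne with h | h
      · exact h.1
      · exfalso
        rcases h.2 with h2 | h2
        · simp only at h2; omega
        · simp only at h2; omega
    · intro j
      by_cases hj : (j : ℕ) % 2 = 0
      · rw [if_pos (by simp [hj])]
        intro p hp q hq hpq
        rw [hmem] at hp hq
        have hne : ((p, (j : ℕ)) : (ℝ × ℝ) × ℕ) ≠ (q, (j : ℕ)) :=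
          fun h => hpq (congrArg Prod.fst h)
        rcases hch a _ hp _ hq hne with h | h
        · left
          refine ⟨h.1, ?_⟩
          rcases h.2 with h2 | h2
          · simp only at h2; omega
          · have h3 := h2.2
            simp only at h3
            rwa [if_pos hj] at h3
        · right
          refine ⟨h.1, ?_⟩
          rcases h.2 with h2 | h2
          · simp only at h2; omega
          · have h3 := h2.2
            simp only at h3
            rwa [if_pos hj] at h3
      · rw [if_neg (by simp [hj])]
        intro p hp q hq hpq
        rw [hmem] at hp hq
        have hne : ((p, (j : ℕ)) : (ℝ × ℝ) × ℕ) ≠ (q, (j : ℕ)) :=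
          fun h => hpq (congrArg Prod.fst h)
        rcases hch a _ hp _ hq hne with h | h
        · left
          refine ⟨h.1, ?_⟩
          rcases h.2 with h2 | h2
          · simp only at h2; omega
          · have h3 := h2.2
            simp only at h3
            rwa [if_neg hj] at h3
        · right
          refine ⟨h.1, ?_⟩
          rcases h.2 with h2 | h2
          · simp only at h2; omega
          · have h3 := h2.2
            simp only at h3
            rwa [if_neg hj] at h3
  · -- subsets
    intro a i p hp
    rw [hmem] at hp
    exact (Finset.mem_product.mp (hsubQ a hp)).1
  · -- existence and uniqueness
    intro i p hp
    have hpQ : (p, (i : ℕ)) ∈ S ×ˢ Finset.range (k + 1) :=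
      Finset.mem_product.mpr ⟨hp, Finset.mem_range.mpr i.isLt⟩
    obtain ⟨a, ha, hu⟩ := hex _ hpQ
    exact ⟨a, (hmem a i p).mpr ha, fun b hb => hu b ((hmem b i p).mp hb)⟩
end

section
/- Let R and R' be two modal paths in a generic point set, with designated partitions into sections R_0,...,R_a and R'_0,...,R'_b (x-consecutive monotone chains with alternating monotonicities). If p ≠ p' are two points, each lying in the intersection of an increasing section R_u of R (resp. R_{u'}) and a decreasing section R'_v of R' (resp. R'_{v'}), then u + v ≠ u' + v'. -/
/-- If p ≠ p' each lie in the intersection of an increasing section of R and a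
decreasing section of R', the index sums differ. -/
theorem stmt10 (a b : ℕ) (upF upG : Bool)
    (F : Fin (a + 1) → Finset (ℝ × ℝ)) (G : Fin (b + 1) → Finset (ℝ × ℝ))
    (hF : SignedSections a upF F) (hG : SignedSections b upG G)
    (p p' : ℝ × ℝ) (hpp : p ≠ p')
    (u u' : Fin (a + 1)) (v v' : Fin (b + 1))
    (hu : decide ((u : ℕ) % 2 = 0) = upF) (hu' : decide ((u' : ℕ) % 2 = 0) = upF)
    (hv : decide ((v : ℕ) % 2 = 0) ≠ upG) (hv' : decide ((v' : ℕ) % 2 = 0) ≠ upG)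
    (hp1 : p ∈ F u) (hp2 : p ∈ G v) (hp1' : p' ∈ F u') (hp2' : p' ∈ G v') :
    (u : ℕ) + (v : ℕ) ≠ (u' : ℕ) + (v' : ℕ) := by
  intro h
  rcases lt_trichotomy u u' with hlt | heq | hgt
  · have h1 : p.1 < p'.1 := hF.1 u u' hlt p hp1 p' hp1'
    have hvv : v' < v := by
      have : (v' : ℕ) < (v : ℕ) := by
        have := Fin.lt_iff_val_lt_val.mp hlt; omega
      exact Fin.lt_iff_val_lt_val.mpr this
    have h2 : p'.1 < p.1 := hG.1 v' v hvv p' hp2' p hp2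
    linarith
  · have hvv : v = v' := by
      apply Fin.ext
      have : (u : ℕ) = (u' : ℕ) := by rw [heq]
      omega
    subst heq; subst hvv
    have hinc : IncChain (F u) := by
      have := hF.2 u; rwa [if_pos hu] at this
    have hdec : DecChain (G v) := by
      have := hG.2 v
      rwa [if_neg hv] at this
    rcases hinc p hp1 p' hp1' hpp with ⟨_, h2⟩ | ⟨_, h2⟩ <;>
      rcases hdec p hp2 p' hp2' hpp with ⟨_, h4⟩ | ⟨_, h4⟩ <;> linarith
  · have h1 : p'.1 < p.1 := hF.1 u' u hgt p' hp1' p hp1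
    have hvv : v < v' := by
      have : (v : ℕ) < (v' : ℕ) := by
        have := Fin.lt_iff_val_lt_val.mp hgt; omega
      exact Fin.lt_iff_val_lt_val.mpr this
    have h2 : p.1 < p'.1 := hG.1 v v' hvv p hp2 p' hp2'
    linarith
end

section
/- Let ℓ_1,...,ℓ_r be positive integers, each path R^i (i=1,...,r) assigned a sign in {+,−}, and for 1 ≤ i < j ≤ r define ℓ(i,j) = ⌊(ℓ_i+ℓ_j)/2⌋ if the signs of R^i, R^j differ and ℓ(i,j) = ⌊(ℓ_i+ℓ_j−1)/2⌋ if they agree. Then Σ_{1 ≤ i < j ≤ r} ℓ(i,j) ≤ Σ_{1 ≤ i < j ≤ r} (ℓ_i+ℓ_j−1)/2 + r/4. -/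
lemma cast_div2 (n : ℕ) : ((n / 2 : ℕ) : ℝ) = ((n : ℝ) - ((n % 2 : ℕ) : ℝ)) / 2 := by
  have h := Nat.div_add_mod n 2
  have h2 : ((2 * (n / 2) + n % 2 : ℕ) : ℝ) = (n : ℝ) := by rw [h]
  push_cast at h2
  linarith

lemma aux11 (a b : ℕ) (ha : 1 ≤ a) (hb : 1 ≤ b) (s t : Bool) :
    ((if s ≠ t then (a + b) / 2 else (a + b - 1) / 2 : ℕ) : ℝ)
      = ((a : ℝ) + b - 1) / 2
        + -(((if s then (1:ℝ) else -1) * (if t then (1:ℝ) else -1))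
            + ((if s then (1:ℝ) else -1) * (if a % 2 = 0 then (1:ℝ) else -1))
              * ((if t then (1:ℝ) else -1) * (if b % 2 = 0 then (1:ℝ) else -1))) / 4 := by
  rcases Nat.mod_two_eq_zero_or_one a with pa | pa <;>
    rcases Nat.mod_two_eq_zero_or_one b with pb | pb <;>
    cases s <;> cases t <;>
    simp only [ne_eq, Bool.false_eq_true, Bool.true_eq_false, not_false_iff, not_true,
      pa, pb, if_true, if_false, ite_true, ite_false] <;>
    norm_num <;>
    rw [cast_div2] <;>
    (try rw [Nat.cast_sub (by omega : 1 ≤ a + b)]) <;>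
    (first
      | rw [show (a + b) % 2 = 0 by omega]
      | rw [show (a + b) % 2 = 1 by omega]
      | rw [show (a + b - 1) % 2 = 0 by omega]
      | rw [show (a + b - 1) % 2 = 1 by omega]) <;>
    push_cast <;> ring

lemma sum_pairs_le (r : ℕ) (x z : Fin r → ℝ)
    (hx : ∀ i, x i = 1 ∨ x i = -1) (hz : ∀ i, z i = 1 ∨ z i = -1) :
    (∑ p ∈ Finset.univ.filter (fun p : Fin r × Fin r => p.1 < p.2),
      (-(x p.1 * x p.2 + z p.1 * z p.2) / 4)) ≤ (r : ℝ) / 4 := by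
  set h : Fin r × Fin r → ℝ := fun p => -(x p.1 * x p.2 + z p.1 * z p.2) / 4 with hh
  have htot : (∑ p : Fin r × Fin r, h p)
      = -((∑ i, x i) ^ 2 + (∑ i, z i) ^ 2) / 4 := by
    rw [Fintype.sum_prod_type]
    have e1 : (∑ i, x i) * (∑ j, x j) = ∑ i, ∑ j, x i * x j := Finset.sum_mul_sum _ _ _ _
    have e2 : (∑ i, z i) * (∑ j, z j) = ∑ i, ∑ j, z i * z j := Finset.sum_mul_sum _ _ _ _
    simp only [hh, neg_div, neg_add, add_div, Finset.sum_add_distrib, Finset.sum_neg_distrib,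
      Finset.sum_div]
    rw [sq, sq, e1, e2]
    simp [Finset.sum_add_distrib, Finset.sum_div]
  have hsplit : (∑ p : Fin r × Fin r, h p)
      = (∑ p ∈ Finset.univ.filter (fun p : Fin r × Fin r => p.1 < p.2), h p)
        + ((∑ p ∈ Finset.univ.filter (fun p : Fin r × Fin r => p.2 < p.1), h p)
          + (∑ p ∈ Finset.univ.filter (fun p : Fin r × Fin r => p.1 = p.2), h p)) := by
    rw [← Finset.sum_filter_add_sum_filter_not Finset.univ (fun p : Fin r × Fin r => p.1 < p.2) h]
    congr 1
    rw [← Finset.sum_filter_add_sum_filter_not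
      (Finset.univ.filter (fun p : Fin r × Fin r => ¬ p.1 < p.2))
      (fun p : Fin r × Fin r => p.2 < p.1) h]
    congr 1
    · congr 1
      ext p
      simp only [Finset.mem_filter, Finset.mem_univ, true_and, Finset.filter_filter]
      omega
    · congr 1
      ext p
      simp only [Finset.mem_filter, Finset.mem_univ, true_and, Finset.filter_filter]
      constructor
      · rintro ⟨h1, h2⟩; omega
      · rintro h1; omega
  have hswap : (∑ p ∈ Finset.univ.filter (fun p : Fin r × Fin r => p.2 < p.1), h p)
      = (∑ p ∈ Finset.univ.filter (fun p : Fin r × Fin r => p.1 < p.2), h p) := by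
    apply Finset.sum_nbij' (fun p => Prod.swap p) (fun p => Prod.swap p)
    · intro a ha; simp at ha ⊢; exact ha
    · intro a ha; simp at ha ⊢; exact ha
    · intro a _; simp
    · intro a _; simp
    · intro a _; simp [hh]; ring
  have hdiag : (∑ p ∈ Finset.univ.filter (fun p : Fin r × Fin r => p.1 = p.2), h p)
      = -(r : ℝ) / 2 := by
    have hset : Finset.univ.filter (fun p : Fin r × Fin r => p.1 = p.2)
        = (Finset.univ : Finset (Fin r)).diag := by
      ext p; simp [Finset.mem_diag]
    rw [hset]
    have : ∀ p ∈ (Finset.univ : Finset (Fin r)).diag, h p = -(1:ℝ)/2 := by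
      rintro ⟨i, j⟩ hp
      simp only [Finset.mem_diag] at hp
      obtain ⟨-, rfl⟩ := hp
      simp only [hh]
      rcases hx i with h1 | h1 <;> rcases hz i with h2 | h2 <;> rw [h1, h2] <;> norm_num
    rw [Finset.sum_congr rfl this]
    simp [Finset.diag_card]
    ring
  rw [hswap, hdiag] at hsplit
  rw [hsplit] at htot
  nlinarith [sq_nonneg (∑ i, x i), sq_nonneg (∑ i, z i)]

theorem stmt11 (r : ℕ) (ℓ : Fin r → ℕ) (hℓ : ∀ i, 1 ≤ ℓ i) (sign : Fin r → Bool) :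
    ((∑ p ∈ Finset.univ.filter (fun p : Fin r × Fin r => p.1 < p.2),
        (if sign p.1 ≠ sign p.2 then (ℓ p.1 + ℓ p.2) / 2
          else (ℓ p.1 + ℓ p.2 - 1) / 2) : ℕ) : ℝ) ≤
      (∑ p ∈ Finset.univ.filter (fun p : Fin r × Fin r => p.1 < p.2),
        (((ℓ p.1 : ℝ) + (ℓ p.2 : ℝ) - 1) / 2)) + (r : ℝ) / 4 := by
  set x : Fin r → ℝ := fun i => if sign i then (1:ℝ) else -1 with hx
  set z : Fin r → ℝ := fun i =>
    (if sign i then (1:ℝ) else -1) * (if ℓ i % 2 = 0 then (1:ℝ) else -1) with hz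
  rw [Nat.cast_sum]
  have hpt : ∀ p ∈ Finset.univ.filter (fun p : Fin r × Fin r => p.1 < p.2),
      ((if sign p.1 ≠ sign p.2 then (ℓ p.1 + ℓ p.2) / 2
          else (ℓ p.1 + ℓ p.2 - 1) / 2 : ℕ) : ℝ)
        = ((ℓ p.1 : ℝ) + (ℓ p.2 : ℝ) - 1) / 2
          + (-(x p.1 * x p.2 + z p.1 * z p.2) / 4) := by
    intro p _
    rw [aux11 (ℓ p.1) (ℓ p.2) (hℓ p.1) (hℓ p.2) (sign p.1) (sign p.2)]
  rw [Finset.sum_congr rfl hpt, Finset.sum_add_distrib]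
  have hle := sum_pairs_le r x z
    (fun i => by simp only [hx]; split <;> simp)
    (fun i => by simp only [hz]; split <;> split <;> norm_num)
  linarith
end

section
/- Fix positive integers s, t, k. Let U = P¹ ∪ ... ∪ P^{s+2t} ⊂ ℝ² where each P^i is a decreasing chain (x increasing, y decreasing), the lengths of P¹,...,P^{s+2t} are t, t+1, ..., 2t−1, then 2t repeated s times, then 2t−1, ..., t+1, t, and every point of P^i is coordinatewise strictly smaller than every point of P^j whenever i < j. Then every k-modal path subset Q of U satisfies |Q| ≤ (k+2)t + s − k/2. -/
/-- Length profile of the decreasing chains in the construction U^{s,t}: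
t, t+1, ..., 2t−1, then 2t (s times), then 2t−1, ..., t+1, t. -/
def chainLen (s t i : ℕ) : ℕ :=
  if i < t then t + i else if i < t + s then 2 * t else 3 * t + s - 1 - i

/-!
Call a section of the path decreasing when its index has the parity of the decreasing sections.
A decreasing section lies inside a single chain, and an increasing section meets each chain at
most once. So a chain met by a decreasing section contributes at most its length, and any other
chain `c` contributes at most the number of sections meeting it. Each of these sections but the
first is preceded by an empty decreasing section: a point of that section would lie between two
points of `c` in `x`, hence in `c`. Charging the chains of the first kind to their nonempty
decreasing sections and the surplus sections of the others to these empty ones uses every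
decreasing index at most once, and there are about `k / 2` of them. When the first or last
section is decreasing, its chain is the lowest or highest one met, and the profile
`t, …, 2t, …, t` of the chain lengths makes up for the extra index.
-/

open Finset

def IsStacked {n : ℕ} (P : Fin n → Finset (ℝ × ℝ)) : Prop :=
  ∀ i j : Fin n, i < j → ∀ p ∈ P i, ∀ q ∈ P j, p.1 < q.1 ∧ p.2 < q.2

theorem IncChain.card_inter_le_one {S T : Finset (ℝ × ℝ)} (hS : IncChain S) (hT : DecChain T) :
    #(S ∩ T) ≤ 1 := by
  refine card_le_one.2 fun p hp q hq => by_contra fun hpq => ?_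
  rw [mem_inter] at hp hq
  rcases hS p hp.1 q hq.1 hpq with h | h <;> rcases hT p hp.2 q hq.2 hpq with h' | h' <;>
    linarith [h.1, h.2, h'.1, h'.2]

namespace IsStacked

variable {n : ℕ} {P : Fin n → Finset (ℝ × ℝ)} {i j : Fin n} {p q : ℝ × ℝ}

theorem le_of_fst_lt (hP : IsStacked P) (hp : p ∈ P i) (hq : q ∈ P j) (h : p.1 < q.1) : i ≤ j :=
  not_lt.1 fun hji => lt_asymm h (hP j i hji q hq p hp).1

theorem eq_of_decChain (hP : IsStacked P) {S : Finset (ℝ × ℝ)} (hS : DecChain S) (hpS : p ∈ S)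
    (hqS : q ∈ S) (hp : p ∈ P i) (hq : q ∈ P j) : i = j := by
  by_contra hij
  have hinc : (p.1 < q.1 ∧ p.2 < q.2) ∨ (q.1 < p.1 ∧ q.2 < p.2) :=
    (lt_or_gt_of_ne hij).imp (fun h => hP i j h p hp q hq) (fun h => hP j i h q hq p hp)
  have hpq : p ≠ q := by rintro rfl; rcases hinc with h | h <;> exact lt_irrefl _ h.1
  rcases hinc with h | h <;> rcases hS p hpS q hqS hpq with h' | h' <;>
    linarith [h.1, h.2, h'.1, h'.2]

end IsStacked

namespace SignedSections

variable {k : ℕ} {up : Bool} {F : Fin (k + 1) → Finset (ℝ × ℝ)}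

theorem decChain (hF : SignedSections k up F) {j : Fin (k + 1)} (hj : (j : ℕ) % 2 = up.toNat) :
    DecChain (F j) := by
  have h := hF.2 j
  rwa [if_neg (by cases up <;> simp at hj ⊢ <;> omega)] at h

theorem incChain (hF : SignedSections k up F) {j : Fin (k + 1)} (hj : (j : ℕ) % 2 ≠ up.toNat) :
    IncChain (F j) := by
  have h := hF.2 j
  rwa [if_pos (by cases up <;> simp at hj ⊢ <;> omega)] at h

end SignedSections

theorem two_mul_card_le_of_mod_two_eq {S : Finset ℕ} {k r : ℕ} (hS : ∀ x ∈ S, x ≤ k ∧ x % 2 = r) :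
    2 * #S ≤ k + ((if 0 ∈ S then 1 else 0) + (if k ∈ S then 1 else 0)) := by
  have hdisj : Disjoint S (S.image (· + 1)) := disjoint_left.2 fun x hx hx' => by
    obtain ⟨y, hy, rfl⟩ := mem_image.1 hx'
    have := (hS y hy).2
    have := (hS _ hx).2
    omega
  have hsub : S ∪ S.image (· + 1) ⊆ Icc (if 0 ∈ S then 0 else 1) (if k ∈ S then k + 1 else k) := by
    intro x hx
    rw [mem_Icc]
    rcases mem_union.1 hx with hx | hx
    · refine ⟨?_, ?_⟩
      · split_ifs with h0
        · exact x.zero_le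
        · exact Nat.pos_of_ne_zero (by rintro rfl; exact h0 hx)
      · have := (hS x hx).1
        split_ifs <;> omega
    · obtain ⟨y, hy, rfl⟩ := mem_image.1 hx
      refine ⟨by split_ifs <;> omega, ?_⟩
      have := (hS y hy).1
      split_ifs with hk
      · omega
      · have : y ≠ k := by rintro rfl; exact hk hy
        omega
  calc 2 * #S = #(S ∪ S.image (· + 1)) := by
        rw [card_union_of_disjoint hdisj, card_image_of_injective _ (add_left_injective 1), two_mul]
    _ ≤ #(Icc (if 0 ∈ S then 0 else 1) (if k ∈ S then k + 1 else k)) := card_le_card hsub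
    _ ≤ _ := by rw [Nat.card_Icc]; split_ifs <;> omega

theorem sum_add_sum_tsub_le {ι : Type*} {D S : Finset ι} (hSD : S ⊆ D) {f : ι → ℕ} {m : ℕ}
    (hf : ∀ c ∈ D, f c ≤ m) : ∑ c ∈ D, f c + ∑ c ∈ S, (m - f c) ≤ m * #D := by
  calc ∑ c ∈ D, f c + ∑ c ∈ S, (m - f c) ≤ ∑ c ∈ D, f c + ∑ c ∈ D, (m - f c) :=
        Nat.add_le_add_left (sum_le_sum_of_subset hSD) _
    _ = ∑ c ∈ D, m := by
        rw [← sum_add_distrib]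
        exact sum_congr rfl fun c hc => Nat.add_sub_of_le (hf c hc)
    _ = m * #D := by rw [sum_const, smul_eq_mul, mul_comm]

section Profile

variable {s t : ℕ}

theorem chainLen_le (i : ℕ) : chainLen s t i ≤ 2 * t := by
  unfold chainLen; split_ifs <;> omega

theorem chainLen_le_add (i : ℕ) : chainLen s t i ≤ t + i := by
  unfold chainLen; split_ifs <;> omega

theorem chainLen_add_lt {i : ℕ} (hi : i < s + 2 * t) : chainLen s t i + i < t + (s + 2 * t) := by
  unfold chainLen; split_ifs <;> omega

theorem sum_add_card_le_of_le_chainLen {f : Fin (s + 2 * t) → ℕ} (hf : ∀ c, f c ≤ chainLen s t c)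
    {D T : Finset (Fin (s + 2 * t))} {lo hi : Prop} [Decidable lo] [Decidable hi]
    (hlo : lo → ∃ c ∈ D, ∀ c' ∈ T, c ≤ c') (hhi : hi → ∃ c ∈ D, ∀ c' ∈ T, c' ≤ c) :
    ∑ c ∈ D, f c + #T + t * ((if lo then 1 else 0) + (if hi then 1 else 0)) ≤
      2 * t * #D + (s + 2 * t) := by
  have hfc : ∀ c : Fin (s + 2 * t), f c ≤ 2 * t ∧ f c ≤ t + c ∧ f c + c < t + (s + 2 * t) :=
    fun c => ⟨(hf c).trans (chainLen_le c), (hf c).trans (chainLen_le_add c),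
      (Nat.add_le_add_right (hf c) c).trans_lt (chainLen_add_lt c.2)⟩
  -- An end chain of `T` falls short of `2 * t` by at least `t` minus the number of chains beyond
  -- it, and `T` avoids those chains.
  have hD : ∀ {S}, S ⊆ D → ∑ c ∈ D, f c + ∑ c ∈ S, (2 * t - f c) ≤ 2 * t * #D :=
    fun hSD => sum_add_sum_tsub_le hSD fun c _ => (hfc c).1
  by_cases hl : lo <;> by_cases hh : hi <;> simp only [hl, hh, if_true, if_false]
  · obtain ⟨c₀, hc₀, hc₀T⟩ := hlo hl
    obtain ⟨c₁, hc₁, hc₁T⟩ := hhi hh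
    have hT : #T ≤ c₁ + 1 - c₀ :=
      (card_le_card fun c hc => mem_Icc.2 ⟨hc₀T c hc, hc₁T c hc⟩).trans_eq (Fin.card_Icc _ _)
    have hS := hD (insert_subset hc₀ (singleton_subset_iff.2 hc₁))
    have := hfc c₀
    have := hfc c₁
    rcases eq_or_ne c₀ c₁ with rfl | hne
    · rw [pair_eq_singleton, sum_singleton] at hS
      omega
    · rw [sum_pair hne] at hS
      omega
  · obtain ⟨c₀, hc₀, hc₀T⟩ := hlo hl
    have hT : #T ≤ s + 2 * t - c₀ :=
      (card_le_card fun c hc => mem_Ici.2 (hc₀T c hc)).trans_eq (Fin.card_Ici _)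
    have hS := hD (singleton_subset_iff.2 hc₀)
    rw [sum_singleton] at hS
    have := hfc c₀
    omega
  · obtain ⟨c₁, hc₁, hc₁T⟩ := hhi hh
    have hT : #T ≤ c₁ + 1 :=
      (card_le_card fun c hc => mem_Iic.2 (hc₁T c hc)).trans_eq (Fin.card_Iic _)
    have hS := hD (singleton_subset_iff.2 hc₁)
    rw [sum_singleton] at hS
    have := hfc c₁
    omega
  · have hT : #T ≤ s + 2 * t := (card_le_univ T).trans_eq (Fintype.card_fin _)
    have hS := hD (empty_subset D)
    rw [sum_empty] at hS
    omega

end Profile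

namespace StackedChains

variable {n k : ℕ} (P : Fin n → Finset (ℝ × ℝ)) (F : Fin (k + 1) → Finset (ℝ × ℝ)) (up : Bool)

noncomputable section

open Classical in
def meeting (c : Fin n) : Finset (Fin (k + 1)) := {j | (F j ∩ P c).Nonempty}

def met : Finset (Fin n) := {c | (meeting P F c).Nonempty}

def decMet : Finset (Fin n) := {c | ∃ j ∈ meeting P F c, (j : ℕ) % 2 = up.toNat}

def gaps (c : Fin n) : Finset ℕ :=
  {j ∈ meeting P F c | ∃ i ∈ meeting P F c, i < j}.image fun j : Fin (k + 1) => (j : ℕ) - 1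

open Classical in
def nonemptyDec : Finset ℕ :=
  ({j | (j : ℕ) % 2 = up.toNat ∧ (F j).Nonempty} : Finset (Fin (k + 1))).image Fin.val

def usedDec : Finset ℕ := nonemptyDec F up ∪ (met P F \ decMet P F up).biUnion (gaps P F)

end

variable {P F up} {a b c : Fin n} {i j : Fin (k + 1)}

@[simp]
theorem mem_meeting : j ∈ meeting P F c ↔ (F j ∩ P c).Nonempty := by
  simp [meeting]

@[simp]
theorem mem_met : c ∈ met P F ↔ (meeting P F c).Nonempty := by
  simp [met]

theorem mem_decMet : c ∈ decMet P F up ↔ ∃ j ∈ meeting P F c, (j : ℕ) % 2 = up.toNat := by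
  simp [decMet]

theorem decMet_subset_met : decMet P F up ⊆ met P F := fun c hc => by
  obtain ⟨j, hj, -⟩ := mem_decMet.1 hc
  exact mem_met.2 ⟨j, hj⟩

theorem le_of_meeting (hP : IsStacked P) (hF : SignedSections k up F) (hij : i < j)
    (ha : i ∈ meeting P F a) (hb : j ∈ meeting P F b) : a ≤ b := by
  obtain ⟨p, hp⟩ := mem_meeting.1 ha
  obtain ⟨q, hq⟩ := mem_meeting.1 hb
  rw [mem_inter] at hp hq
  exact hP.le_of_fst_lt hp.2 hq.2 (hF.1 i j hij p hp.1 q hq.1)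

theorem eq_of_meeting (hP : IsStacked P) (hF : SignedSections k up F)
    (hj : (j : ℕ) % 2 = up.toNat) (ha : j ∈ meeting P F a) (hb : j ∈ meeting P F b) : a = b := by
  obtain ⟨p, hp⟩ := mem_meeting.1 ha
  obtain ⟨q, hq⟩ := mem_meeting.1 hb
  rw [mem_inter] at hp hq
  exact hP.eq_of_decChain (hF.decChain hj) hp.1 hq.1 hp.2 hq.2

theorem le_of_meeting_of_le (hP : IsStacked P) (hF : SignedSections k up F) (hij : i ≤ j)
    (hdec : i = j → (j : ℕ) % 2 = up.toNat) (ha : i ∈ meeting P F a) (hb : j ∈ meeting P F b) :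
    a ≤ b := by
  rcases hij.lt_or_eq with h | rfl
  · exact le_of_meeting hP hF h ha hb
  · exact (eq_of_meeting hP hF (hdec rfl) ha hb).le

theorem card_meeting_le_card_gaps_add_one : #(meeting P F c) ≤ #(gaps P F c) + 1 := by
  have hfirst : #{j ∈ meeting P F c | ¬∃ i ∈ meeting P F c, i < j} ≤ 1 := by
    refine card_le_one.2 fun i hi j hj => ?_
    rw [mem_filter] at hi hj
    rcases lt_trichotomy i j with h | h | h
    exacts [absurd ⟨i, hi.1, h⟩ hj.2, h, absurd ⟨j, hj.1, h⟩ hi.2]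
  have hgaps : #(gaps P F c) = #{j ∈ meeting P F c | ∃ i ∈ meeting P F c, i < j} :=
    card_image_of_injOn fun j hj j' hj' h => by
      obtain ⟨i, -, hij⟩ := (mem_filter.1 hj).2
      obtain ⟨i', -, hij'⟩ := (mem_filter.1 hj').2
      have h : (j : ℕ) - 1 = (j' : ℕ) - 1 := h
      exact Fin.ext (by omega)
  rw [← card_filter_add_card_filter_not (fun j => ∃ i ∈ meeting P F c, i < j), hgaps]
  omega

theorem mem_gaps (hP : IsStacked P) (hF : SignedSections k up F)
    (hFP : ∀ j, F j ⊆ univ.biUnion P) (hc : c ∉ decMet P F up) {x : ℕ} (hx : x ∈ gaps P F c) :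
    0 < x ∧ x < k ∧ x % 2 = up.toNat ∧ ∀ l : Fin (k + 1), (l : ℕ) = x → F l = ∅ := by
  obtain ⟨j, hj, rfl⟩ := mem_image.1 hx
  obtain ⟨hjc, i, hic, hij⟩ := mem_filter.1 hj
  have hij : (i : ℕ) < j := hij
  have hjdec : (j : ℕ) % 2 ≠ up.toNat := fun h => hc (mem_decMet.2 ⟨j, hjc, h⟩)
  have hxdec : ((j : ℕ) - 1) % 2 = up.toNat := by have := up.toNat_le; omega
  have hnot : ∀ l : Fin (k + 1), (l : ℕ) = j - 1 → l ∉ meeting P F c :=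
    fun l hl hlc => hc (mem_decMet.2 ⟨l, hlc, hl ▸ hxdec⟩)
  have hix : (i : ℕ) < j - 1 := by
    rcases (Nat.le_sub_one_of_lt hij).lt_or_eq with h | h
    exacts [h, absurd hic (hnot i h)]
  refine ⟨by omega, by omega, hxdec, fun l hl => eq_empty_of_forall_notMem fun q hq => ?_⟩
  obtain ⟨b, -, hqb⟩ := mem_biUnion.1 (hFP l hq)
  have hlb : l ∈ meeting P F b := mem_meeting.2 ⟨q, mem_inter.2 ⟨hq, hqb⟩⟩
  have hbc : b = c := le_antisymm (le_of_meeting hP hF (Fin.lt_def.2 (by omega)) hlb hjc)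
    (le_of_meeting hP hF (Fin.lt_def.2 (by omega)) hic hlb)
  exact hnot l hl (hbc ▸ hlb)

theorem eq_of_mem_gaps (hP : IsStacked P) (hF : SignedSections k up F) {x : ℕ}
    (ha : x ∈ gaps P F a) (hb : x ∈ gaps P F b) : a = b := by
  obtain ⟨j, hj, rfl⟩ := mem_image.1 ha
  obtain ⟨j', hj', hjj'⟩ := mem_image.1 hb
  obtain ⟨hja, i, hia, hij⟩ := mem_filter.1 hj
  obtain ⟨hjb, i', hib, hij'⟩ := mem_filter.1 hj'
  obtain rfl : j' = j := Fin.ext (by have : (i : ℕ) < j := hij; have : (i' : ℕ) < j' := hij'; omega)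
  exact le_antisymm (le_of_meeting hP hF hij hia hjb) (le_of_meeting hP hF hij' hib hja)

theorem card_decMet_le (hP : IsStacked P) (hF : SignedSections k up F) :
    #(decMet P F up) ≤ #(nonemptyDec F up) := by
  refine card_le_card_of_forall_subsingleton
    (fun c x => ∃ j : Fin (k + 1), (j : ℕ) = x ∧ j ∈ meeting P F c) (fun c hc => ?_) ?_
  · obtain ⟨j, hjc, hjdec⟩ := mem_decMet.1 hc
    have hj : (F j).Nonempty := (mem_meeting.1 hjc).mono inter_subset_left
    exact ⟨j, mem_image.2 ⟨j, by simp [hjdec, hj], rfl⟩, j, rfl, hjc⟩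
  · rintro x hx a ⟨-, j, hjx, hja⟩ b ⟨-, j', hj'x, hjb⟩
    obtain rfl : j' = j := Fin.ext (hj'x.trans hjx.symm)
    obtain ⟨j₀, hj₀, rfl⟩ := mem_image.1 hx
    obtain rfl := Fin.ext hjx
    exact eq_of_meeting hP hF (mem_filter.1 hj₀).2.1 hja hjb

theorem card_decMet_le_card_usedDec (hP : IsStacked P) (hF : SignedSections k up F) :
    #(decMet P F up) ≤ #(usedDec P F up) :=
  (card_decMet_le hP hF).trans (card_le_card subset_union_left)

theorem card_usedDec (hP : IsStacked P) (hF : SignedSections k up F)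
    (hFP : ∀ j, F j ⊆ univ.biUnion P) :
    #(usedDec P F up) = #(nonemptyDec F up) + ∑ c ∈ met P F \ decMet P F up, #(gaps P F c) := by
  rw [usedDec, card_union_of_disjoint, card_biUnion]
  · exact fun a _ b _ hab => disjoint_left.2 fun x ha hb => hab (eq_of_mem_gaps hP hF ha hb)
  · refine disjoint_left.2 fun x hx hx' => ?_
    obtain ⟨j, hj, rfl⟩ := mem_image.1 hx
    obtain ⟨c, hc, hjc⟩ := mem_biUnion.1 hx'
    have hempty := (mem_gaps hP hF hFP (mem_sdiff.1 hc).2 hjc).2.2.2 j rfl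
    exact (mem_filter.1 hj).2.2.ne_empty hempty

theorem card_inter_le_card_meeting (hPdec : ∀ c, DecChain (P c)) (hF : SignedSections k up F)
    (hc : c ∉ decMet P F up) : #(univ.biUnion F ∩ P c) ≤ #(meeting P F c) := by
  have hsub : univ.biUnion F ∩ P c ⊆ (meeting P F c).biUnion fun j => F j ∩ P c := fun p hp => by
    obtain ⟨hpF, hpc⟩ := mem_inter.1 hp
    obtain ⟨j, -, hpj⟩ := mem_biUnion.1 hpF
    exact mem_biUnion.2 ⟨j, mem_meeting.2 ⟨p, mem_inter.2 ⟨hpj, hpc⟩⟩, mem_inter.2 ⟨hpj, hpc⟩⟩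
  calc #(univ.biUnion F ∩ P c) ≤ ∑ j ∈ meeting P F c, #(F j ∩ P c) :=
        (card_le_card hsub).trans card_biUnion_le
    _ ≤ ∑ j ∈ meeting P F c, 1 := sum_le_sum fun j hj =>
        (hF.incChain fun h => hc (mem_decMet.2 ⟨j, hj, h⟩)).card_inter_le_one (hPdec c)
    _ = #(meeting P F c) := (card_eq_sum_ones _).symm

theorem card_biUnion_le_sum_decMet (hPdec : ∀ c, DecChain (P c)) (hF : SignedSections k up F)
    (hFP : ∀ j, F j ⊆ univ.biUnion P) :
    #(univ.biUnion F) ≤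
      ∑ c ∈ decMet P F up, #(P c) + ∑ c ∈ met P F \ decMet P F up, #(meeting P F c) := by
  have hcover : univ.biUnion F ⊆ univ.biUnion fun c => univ.biUnion F ∩ P c := fun p hp => by
    obtain ⟨j, -, hpj⟩ := mem_biUnion.1 hp
    obtain ⟨c, -, hpc⟩ := mem_biUnion.1 (hFP j hpj)
    exact mem_biUnion.2 ⟨c, mem_univ c, mem_inter.2 ⟨hp, hpc⟩⟩
  have hunmet : ∀ c ∈ (decMet P F up)ᶜ, c ∉ met P F \ decMet P F up → #(meeting P F c) = 0 :=
    fun c hc hc' => by simpa [mem_compl.1 hc] using hc'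
  calc #(univ.biUnion F) ≤ ∑ c, #(univ.biUnion F ∩ P c) :=
        (card_le_card hcover).trans card_biUnion_le
    _ = ∑ c ∈ decMet P F up, #(univ.biUnion F ∩ P c) +
          ∑ c ∈ (decMet P F up)ᶜ, #(univ.biUnion F ∩ P c) := (sum_add_sum_compl _ _).symm
    _ ≤ ∑ c ∈ decMet P F up, #(P c) + ∑ c ∈ (decMet P F up)ᶜ, #(meeting P F c) :=
        add_le_add (sum_le_sum fun c _ => card_le_card inter_subset_right)
          (sum_le_sum fun c hc => card_inter_le_card_meeting hPdec hF (mem_compl.1 hc))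
    _ = _ := by rw [sum_subset (fun c hc => mem_compl.2 (mem_sdiff.1 hc).2) hunmet]

theorem card_biUnion_add_two_mul_card_decMet_le (hP : IsStacked P) (hPdec : ∀ c, DecChain (P c))
    (hF : SignedSections k up F) (hFP : ∀ j, F j ⊆ univ.biUnion P) :
    #(univ.biUnion F) + 2 * #(decMet P F up) ≤
      ∑ c ∈ decMet P F up, #(P c) + #(met P F) + #(usedDec P F up) := by
  have hmeet : ∑ c ∈ met P F \ decMet P F up, #(meeting P F c) ≤
      ∑ c ∈ met P F \ decMet P F up, #(gaps P F c) + (#(met P F) - #(decMet P F up)) := by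
    rw [← card_sdiff_of_subset decMet_subset_met, card_eq_sum_ones, ← sum_add_distrib]
    exact sum_le_sum fun c _ => card_meeting_le_card_gaps_add_one
  have := card_biUnion_le_sum_decMet hPdec hF hFP
  have := card_usedDec hP hF hFP
  have := card_decMet_le hP hF
  have := card_le_card (decMet_subset_met (P := P) (F := F) (up := up))
  omega

theorem mem_usedDec (hP : IsStacked P) (hF : SignedSections k up F)
    (hFP : ∀ j, F j ⊆ univ.biUnion P) {x : ℕ} (hx : x ∈ usedDec P F up) :
    x ≤ k ∧ x % 2 = up.toNat := by
  rcases mem_union.1 hx with h | h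
  · obtain ⟨j, hj, rfl⟩ := mem_image.1 h
    exact ⟨Nat.lt_succ_iff.1 j.2, (mem_filter.1 hj).2.1⟩
  · obtain ⟨c, hc, hxc⟩ := mem_biUnion.1 h
    obtain ⟨-, hxk, hxdec, -⟩ := mem_gaps hP hF hFP (mem_sdiff.1 hc).2 hxc
    exact ⟨hxk.le, hxdec⟩

theorem exists_meeting_of_mem_usedDec (hP : IsStacked P) (hF : SignedSections k up F)
    (hFP : ∀ j, F j ⊆ univ.biUnion P) {x : ℕ} (hx : x ∈ usedDec P F up) (hend : x = 0 ∨ x = k) :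
    ∃ j : Fin (k + 1), (j : ℕ) = x ∧ (j : ℕ) % 2 = up.toNat ∧ ∃ c, j ∈ meeting P F c := by
  rcases mem_union.1 hx with h | h
  · obtain ⟨j, hj, rfl⟩ := mem_image.1 h
    obtain ⟨-, hjdec, p, hp⟩ := mem_filter.1 hj
    obtain ⟨c, -, hpc⟩ := mem_biUnion.1 (hFP j hp)
    exact ⟨j, rfl, hjdec, c, mem_meeting.2 ⟨p, mem_inter.2 ⟨hp, hpc⟩⟩⟩
  · obtain ⟨c, hc, hxc⟩ := mem_biUnion.1 h
    have := mem_gaps hP hF hFP (mem_sdiff.1 hc).2 hxc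
    omega

theorem exists_decMet_le_of_zero_mem (hP : IsStacked P) (hF : SignedSections k up F)
    (hFP : ∀ j, F j ⊆ univ.biUnion P) (h0 : 0 ∈ usedDec P F up) :
    ∃ c ∈ decMet P F up, ∀ c' ∈ met P F, c ≤ c' := by
  obtain ⟨j, hj0, hjdec, c, hjc⟩ := exists_meeting_of_mem_usedDec hP hF hFP h0 (Or.inl rfl)
  refine ⟨c, mem_decMet.2 ⟨j, hjc, hjdec⟩, fun c' hc' => ?_⟩
  obtain ⟨i, hi⟩ := mem_met.1 hc'
  exact le_of_meeting_of_le hP hF (Fin.le_def.2 (by omega)) (fun h => h ▸ hjdec) hjc hi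

theorem exists_le_decMet_of_last_mem (hP : IsStacked P) (hF : SignedSections k up F)
    (hFP : ∀ j, F j ⊆ univ.biUnion P) (hk : k ∈ usedDec P F up) :
    ∃ c ∈ decMet P F up, ∀ c' ∈ met P F, c' ≤ c := by
  obtain ⟨j, hjk, hjdec, c, hjc⟩ := exists_meeting_of_mem_usedDec hP hF hFP hk (Or.inr rfl)
  refine ⟨c, mem_decMet.2 ⟨j, hjc, hjdec⟩, fun c' hc' => ?_⟩
  obtain ⟨i, hi⟩ := mem_met.1 hc'
  exact le_of_meeting_of_le hP hF (Fin.le_def.2 (by omega)) (fun _ => hjdec) hi hjc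

end StackedChains

theorem stmt13_general (s t k : ℕ) (ht : 1 ≤ t)
    (P : Fin (s + 2 * t) → Finset (ℝ × ℝ))
    (hdec : ∀ i, DecChain (P i))
    (hcard : ∀ i : Fin (s + 2 * t), (P i).card = chainLen s t (i : ℕ))
    (hcomp : ∀ i j : Fin (s + 2 * t), i < j →
      ∀ p ∈ P i, ∀ q ∈ P j, p.1 < q.1 ∧ p.2 < q.2)
    (Q : Finset (ℝ × ℝ)) (hQ : Q ⊆ Finset.univ.biUnion P) (hmodal : IsModalPath k Q) :
    (Q.card : ℝ) ≤ ((k : ℝ) + 2) * t + s - (k : ℝ)/2 := by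
  obtain ⟨up, F, hQF, hFQ, hF⟩ := hmodal
  have hFP : ∀ j, F j ⊆ univ.biUnion P := fun j => (hFQ j).trans hQ
  have hQ' : #Q ≤ #(univ.biUnion F) := card_le_card fun p hp => by
    obtain ⟨j, hj⟩ := hQF p hp
    exact mem_biUnion.2 ⟨j, mem_univ j, hj⟩
  have hmain := StackedChains.card_biUnion_add_two_mul_card_decMet_le hcomp hdec hF hFP
  have hDE := StackedChains.card_decMet_le_card_usedDec hcomp hF
  have hpar := two_mul_card_le_of_mod_two_eq fun _ => StackedChains.mem_usedDec hcomp hF hFP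
  have hprof := sum_add_card_le_of_le_chainLen (fun c => (hcard c).le)
    (StackedChains.exists_decMet_le_of_zero_mem hcomp hF hFP)
    (StackedChains.exists_le_decMet_of_last_mem hcomp hF hFP)
  generalize (if 0 ∈ StackedChains.usedDec P F up then 1 else 0) +
    (if k ∈ StackedChains.usedDec P F up then 1 else 0) = e at hpar hprof
  -- `nlinarith` multiplies `t - 1 ≥ 0` into `hDE` and `hpar`.
  have hnat : 2 * #Q + k ≤ 2 * k * t + 4 * t + 2 * s := by nlinarith
  have hreal : (2 * #Q + k : ℝ) ≤ 2 * k * t + 4 * t + 2 * s := by exact_mod_cast hnat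
  linarith

theorem stmt13 (s t k : ℕ) (hs : 1 ≤ s) (ht : 1 ≤ t) (hk : 1 ≤ k)
    (P : Fin (s + 2 * t) → Finset (ℝ × ℝ))
    (hdec : ∀ i, DecChain (P i))
    (hcard : ∀ i : Fin (s + 2 * t), (P i).card = chainLen s t (i : ℕ))
    (hcomp : ∀ i j : Fin (s + 2 * t), i < j →
      ∀ p ∈ P i, ∀ q ∈ P j, p.1 < q.1 ∧ p.2 < q.2)
    (Q : Finset (ℝ × ℝ)) (hQ : Q ⊆ Finset.univ.biUnion P) (hmodal : IsModalPath k Q) :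
    (Q.card : ℝ) ≤ ((k : ℝ) + 2) * t + s - (k : ℝ)/2 :=
  stmt13_general s t k ht P hdec hcard hcomp Q hQ hmodal
end

section
/- For integers k ≥ 1 and n ≥ 10k³, set x = ⌈√((2k+1)(n − 1/4)) − k/2⌉, y = x + 1 + ⌈k/2⌉, t = ⌊y/(2k+1) + 1/2⌋ (nearest integer), s = y − (k+2)t. Then t(2y − (2k+1)t + 1) ≥ n. -/
set_option maxHeartbeats 1000000


theorem stmt16 (k n : ℕ) (hk : 1 ≤ k) (hn : 10 * k ^ 3 ≤ n)
    (x y t s : ℤ)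
    (hx : x = ⌈Real.sqrt ((2 * (k : ℝ) + 1) * ((n : ℝ) - 1/4)) - (k : ℝ)/2⌉)
    (hy : y = x + 1 + ⌈(k : ℝ)/2⌉)
    (ht : t = ⌊(y : ℝ) / (2 * (k : ℝ) + 1) + 1/2⌋)
    (hs : s = y - ((k : ℤ) + 2) * t) :
    (n : ℤ) ≤ t * (2 * y - (2 * (k : ℤ) + 1) * t + 1) := by
  have hk1 : (1:ℝ) ≤ (k:ℝ) := by exact_mod_cast hk
  have hn' : (10:ℝ) * (k:ℝ)^3 ≤ (n:ℝ) := by exact_mod_cast hn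
  set K : ℝ := 2*(k:ℝ)+1 with hK
  have hK3 : (3:ℝ) ≤ K := by rw [hK]; linarith
  have hKpos : (0:ℝ) < K := by linarith
  have hk3 : (1:ℝ) ≤ (k:ℝ)^3 := one_le_pow₀ hk1
  have hn14 : (0:ℝ) < (n:ℝ) - 1/4 := by nlinarith
  set a := Real.sqrt (K * ((n:ℝ) - 1/4)) with haDef
  have hnn : (0:ℝ) ≤ K * ((n:ℝ)-1/4) := mul_nonneg hKpos.le hn14.le
  have ha0 : 0 ≤ a := Real.sqrt_nonneg _
  have ha2 : a^2 = K * ((n:ℝ)-1/4) := Real.sq_sqrt hnn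
  have hxa : a - (k:ℝ)/2 ≤ (x:ℝ) := by
    rw [hx]; exact_mod_cast Int.le_ceil _
  clear_value a
  have hthigh : (t:ℝ) ≤ (y:ℝ)/K + 1/2 := by
    rw [ht]; exact_mod_cast Int.floor_le _
  have htlow : (y:ℝ)/K + 1/2 < (t:ℝ) + 1 := by
    rw [ht]; exact Int.lt_floor_add_one _
  have hcancel : K * ((y:ℝ)/K) = (y:ℝ) := mul_div_cancel₀ _ hKpos.ne'
  clear_value K
  clear ht hx haDef
  -- polynomial inequality in k
  have hpoly : (K^2 + 3*K - 8)^2 ≤ 144 * (K * ((10:ℝ)*(k:ℝ)^3 - 1/4)) := by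
    rw [hK]; nlinarith [hk1, sq_nonneg ((k:ℝ) - 1), sq_nonneg ((k:ℝ)^2 - 1),
      mul_le_mul hk1 hk1 (by linarith) (by linarith)]
  have hc10 : (10:ℝ) ≤ K^2 + 3*K - 8 := by nlinarith
  have h144 : (K^2 + 3*K - 8)^2 ≤ 144 * a^2 := by
    have hKn := mul_le_mul_of_nonneg_left hn' hKpos.le
    nlinarith [hpoly, ha2, hKn]
  have h12a : K^2 + 3*K - 8 ≤ 12 * a := by nlinarith [h144, ha0, hc10]
  have hck : (k:ℝ)/2 ≤ ((⌈(k:ℝ)/2⌉ : ℤ):ℝ) := Int.le_ceil _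
  have hY : a + 1 ≤ (y:ℝ) := by
    have hyy : ((y:ℤ):ℝ) = ((x:ℤ):ℝ) + 1 + ((⌈(k:ℝ)/2⌉ : ℤ):ℝ) := by
      rw [hy]; push_cast; ring
    rw [hyy]; linarith
  have h1 : K * (t:ℝ) ≤ (y:ℝ) + K/2 := by
    have h := mul_le_mul_of_nonneg_left hthigh hKpos.le
    rw [mul_add, hcancel] at h
    linarith
  have h2 : (y:ℝ) - K/2 ≤ K * (t:ℝ) := by
    have h := mul_lt_mul_of_pos_left htlow hKpos
    rw [mul_add, hcancel] at h
    linarith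
  have hD1 : (K*(t:ℝ) - (y:ℝ))^2 ≤ K^2/4 := by nlinarith [h1, h2]
  have hy2 : (a+1)^2 + (a+1) ≤ (y:ℝ)^2 + (y:ℝ) := by nlinarith [hY, ha0]
  have hfinal : K * (n:ℝ) ≤ K * ((t:ℝ)*(2*(y:ℝ) - K*(t:ℝ) + 1)) := by
    nlinarith [hD1, hy2, ha2, h12a, h1, h2]
  have key : (n:ℝ) ≤ (t:ℝ)*(2*(y:ℝ) - (2*(k:ℝ)+1)*(t:ℝ) + 1) := by
    have hh := le_of_mul_le_mul_left hfinal hKpos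
    rw [hK] at hh
    linarith
  exact_mod_cast key
end

section
/- Let k ≥ 0 and let C be a finite multiset of (+k)-paths and (−k)-paths of a finite generic set S, forming fine coverings (the i-th sections of the (+k)-paths partition S for each i, and likewise for the (−k)-paths). Define φ(P), for P whose first point s(P) lies in section P_i with i < k, as the unique path Q of the opposite sign with s(P) ∈ Q_{i+1}. Then φ has no cycles: there is no ℓ ≥ 1 and path P with φ^{(ℓ)}(P) = P. -/
/-- Acyclicity of the map φ: given fine coverings by (+k)- and (−k)-paths
(a combined indexed family C with signs), with sp a the first point of path a,
ip a its section index, and φ the map sending a (with ip a < k) to the opposite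
sign path containing sp a in its (ip a + 1)-th section, φ has no cycles. -/
theorem stmt17 (k : ℕ) (S : Finset (ℝ × ℝ)) (hS : Generic S) (m : ℕ)
    (C : Fin m → Fin (k + 1) → Finset (ℝ × ℝ)) (sgn : Fin m → Bool)
    (hsec : ∀ a, SignedSections k (sgn a) (C a))
    (hsub : ∀ a i, C a i ⊆ S)
    (hcov : ∀ (b : Bool) (i : Fin (k + 1)), ∀ p ∈ S, ∃! a, sgn a = b ∧ p ∈ C a i)
    (sp : Fin m → ℝ × ℝ) (ip : Fin m → Fin (k + 1))
    (hsp : ∀ a, sp a ∈ C a (ip a) ∧ ∀ i, ∀ q ∈ C a i, (sp a).1 ≤ q.1)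
    (phi : Fin m → Fin m)
    (hphi : ∀ a, (ip a : ℕ) < k → sgn (phi a) = !(sgn a) ∧
      ∃ j : Fin (k + 1), (j : ℕ) = (ip a : ℕ) + 1 ∧ sp a ∈ C (phi a) j) :
    ¬ ∃ (a : Fin m) (ℓ : ℕ), 0 < ℓ ∧
        (∀ j < ℓ, (ip (phi^[j] a) : ℕ) < k) ∧ phi^[ℓ] a = a := by
  rintro ⟨a, ℓ, hℓ, hlt, hcyc⟩
  -- the lexicographic measure relation
  set r : Fin m → Fin m → Prop := fun b c =>
    (sp b).1 < (sp c).1 ∨ ((sp b).1 = (sp c).1 ∧ (ip c : ℕ) < (ip b : ℕ)) with hr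
  have rtrans : ∀ {x y z}, r x y → r y z → r x z := by
    rintro x y z (h1 | ⟨h1, h1'⟩) (h2 | ⟨h2, h2'⟩)
    · exact Or.inl (h1.trans h2)
    · exact Or.inl (h2 ▸ h1)
    · exact Or.inl (h1 ▸ h2)
    · exact Or.inr ⟨h1.trans h2, h2'.trans h1'⟩
  have rirr : ∀ x, ¬ r x x := by
    rintro x (h | ⟨_, h⟩) <;> exact lt_irrefl _ h
  -- the key step lemma
  have step : ∀ b : Fin m, (ip b : ℕ) < k → r (phi b) b := by
    intro b hb
    obtain ⟨hsgn, j, hj, hmem⟩ := hphi b hb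
    have hle : (sp (phi b)).1 ≤ (sp b).1 := (hsp (phi b)).2 j (sp b) hmem
    rcases lt_or_eq_of_le hle with h | h
    · exact Or.inl h
    · refine Or.inr ⟨h, ?_⟩
      -- genericity: sp (phi b) = sp b
      have hS1 : sp (phi b) ∈ S := hsub (phi b) (ip (phi b)) (hsp (phi b)).1
      have hS2 : sp b ∈ S := hsub b (ip b) (hsp b).1
      have heq : sp (phi b) = sp b := by
        by_contra hne
        exact (hS _ hS1 _ hS2 hne).1 h
      -- sections are disjoint, so ip (phi b) = j
      have hmem' : sp b ∈ C (phi b) (ip (phi b)) := heq ▸ (hsp (phi b)).1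
      have hord := (hsec (phi b)).1
      have hij : ip (phi b) = j := by
        rcases lt_trichotomy (ip (phi b)) j with hlt' | he | hgt
        · exact absurd (hord _ _ hlt' _ hmem' _ hmem) (lt_irrefl _)
        · exact he
        · exact absurd (hord _ _ hgt _ hmem _ hmem') (lt_irrefl _)
      have : (ip (phi b) : ℕ) = (ip b : ℕ) + 1 := by rw [hij, hj]
      omega
  -- iterate: r (phi^[n] a) a for 0 < n ≤ ℓ
  have key : ∀ n, 0 < n → n ≤ ℓ → r (phi^[n] a) a := by
    intro n
    induction n with
    | zero => omega
    | succ n ih =>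
      intro _ hn
      rcases Nat.eq_zero_or_pos n with h0 | hpos
      · subst h0
        simpa using step a (hlt 0 hℓ)
      · have h1 : r (phi^[n + 1] a) (phi^[n] a) := by
          rw [Function.iterate_succ_apply']
          exact step _ (hlt n (by omega))
        exact rtrans h1 (ih hpos (by omega))
  have := key ℓ hℓ le_rfl
  rw [hcyc] at this
  exact rirr a this
end
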